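/- Let ψ be a permutation-symmetric state of n qudits and let X, Y be d×d matrices such that X_{(1)}ψ and Y_{(2)}ψ are both in the symmetric subspace. Then X_{(1)}Y_{(2)}ψ is in the symmetric subspace if and only if [X,Y]_{(1)}ψ = 0, i.e. the commutator of X and Y applied (on the first factor) to ψ vanishes. -/
import Mathlib


open Matrix BigOperators Polynomial

/-- Permutation symmetry of an `n`-qudit state represented by its amplitudes. -/
def PSym {n d : ℕ} (ψ : (Fin n → Fin d) → ℂ) : Prop :=
  ∀ σ : Equiv.Perm (Fin n), ∀ x : Fin n → Fin d, ψ (x ∘ σ) = ψ x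

/-- The operator `B` acting on the `k`-th tensor factor (identity elsewhere). -/
noncomputable def appAt {n d : ℕ} (k : Fin n) (B : Matrix (Fin d) (Fin d) ℂ)
    (ψ : (Fin n → Fin d) → ℂ) : (Fin n → Fin d) → ℂ :=
  fun x => ∑ j : Fin d, B (x k) j * ψ (Function.update x k j)

/-- The operator `A 1 ⊗ A 2 ⊗ ⋯ ⊗ A n` acting on an `n`-qudit state. -/
noncomputable def appAll {n d : ℕ} (A : Fin n → Matrix (Fin d) (Fin d) ℂ)
    (ψ : (Fin n → Fin d) → ℂ) : (Fin n → Fin d) → ℂ :=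
  fun x => ∑ y : Fin n → Fin d, (∏ k, A k (x k) (y k)) * ψ y

lemma appAt_comp_perm {n d : ℕ} (B : Matrix (Fin d) (Fin d) ℂ) (ψ : (Fin n → Fin d) → ℂ)
    (hψ : PSym ψ) (σ : Equiv.Perm (Fin n)) (k : Fin n) (x : Fin n → Fin d) :
    appAt k B ψ (x ∘ σ) = appAt (σ k) B ψ x := by
  unfold appAt
  refine Finset.sum_congr rfl fun j _ => ?_
  have h1 : (x ∘ σ) k = x (σ k) := rfl
  rw [h1]
  have h2 : Function.update (x ∘ ⇑σ) k j = Function.update x (σ k) j ∘ ⇑σ := by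
    rw [Function.update_comp_equiv x σ (σ k) j, Equiv.symm_apply_apply]
  rw [h2, hψ σ]

lemma psym_appAt_iff {n d : ℕ} (B : Matrix (Fin d) (Fin d) ℂ) (ψ : (Fin n → Fin d) → ℂ)
    (hψ : PSym ψ) (k : Fin n) :
    PSym (appAt k B ψ) ↔ ∀ a : Fin n, appAt a B ψ = appAt k B ψ := by
  constructor
  · intro h a
    funext x
    have h2 := h (Equiv.swap k a) x
    rw [appAt_comp_perm B ψ hψ (Equiv.swap k a) k x, Equiv.swap_apply_left] at h2
    exact h2
  · intro h σ x
    rw [appAt_comp_perm B ψ hψ σ k x, h (σ k)]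

lemma appAt_comm {n d : ℕ} (A B : Matrix (Fin d) (Fin d) ℂ) (ψ : (Fin n → Fin d) → ℂ)
    {a b : Fin n} (hab : a ≠ b) :
    appAt a A (appAt b B ψ) = appAt b B (appAt a A ψ) := by
  funext x
  simp only [appAt, Finset.mul_sum]
  rw [Finset.sum_comm]
  refine Finset.sum_congr rfl fun i _ => Finset.sum_congr rfl fun j _ => ?_
  rw [Function.update_of_ne hab.symm, Function.update_of_ne hab,
    Function.update_comm hab]
  ring

lemma appAt_mul {n d : ℕ} (A B : Matrix (Fin d) (Fin d) ℂ) (ψ : (Fin n → Fin d) → ℂ)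
    (k : Fin n) :
    appAt k A (appAt k B ψ) = appAt k (A * B) ψ := by
  funext x
  simp only [appAt, Finset.mul_sum, Matrix.mul_apply, Finset.sum_mul]
  rw [Finset.sum_comm]
  refine Finset.sum_congr rfl fun i _ => Finset.sum_congr rfl fun j _ => ?_
  rw [Function.update_self, Function.update_idem]
  ring

lemma appAt_sub {n d : ℕ} (A B : Matrix (Fin d) (Fin d) ℂ) (ψ : (Fin n → Fin d) → ℂ)
    (k : Fin n) :
    appAt k (A - B) ψ = appAt k A ψ - appAt k B ψ := by
  funext x
  simp [appAt, Matrix.sub_apply, sub_mul, Finset.sum_sub_distrib]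

lemma appAt_eq_zero_trans {n d : ℕ} (B : Matrix (Fin d) (Fin d) ℂ) (ψ : (Fin n → Fin d) → ℂ)
    (hψ : PSym ψ) (a k : Fin n) (h : appAt a B ψ = 0) : appAt k B ψ = 0 := by
  funext x
  have h2 := appAt_comp_perm B ψ hψ (Equiv.swap a k) a x
  rw [Equiv.swap_apply_left] at h2
  rw [← h2, h]
  rfl

theorem stmt_1 {n d : ℕ} (hn : 2 ≤ n) (ψ : (Fin n → Fin d) → ℂ) (hψ : PSym ψ)
    (X Y : Matrix (Fin d) (Fin d) ℂ)
    (hX : PSym (appAt ⟨0, by omega⟩ X ψ))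
    (hY : PSym (appAt ⟨1, by omega⟩ Y ψ)) :
    PSym (appAt ⟨0, by omega⟩ X (appAt ⟨1, by omega⟩ Y ψ)) ↔
      appAt ⟨0, by omega⟩ (X * Y - Y * X) ψ = 0 := by
  have h0 : 0 < n := by omega
  have h1 : 1 < n := by omega
  set z0 : Fin n := ⟨0, h0⟩ with hz0
  set z1 : Fin n := ⟨1, h1⟩ with hz1
  have hz : z0 ≠ z1 := by simp [hz0, hz1, Fin.ext_iff]
  have hXeq : ∀ a : Fin n, appAt a X ψ = appAt z0 X ψ :=
    (psym_appAt_iff X ψ hψ z0).1 hX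
  have hYeq : ∀ a : Fin n, appAt a Y ψ = appAt z1 Y ψ :=
    (psym_appAt_iff Y ψ hψ z1).1 hY
  have E1 : appAt z0 X (appAt z1 Y ψ) = appAt z1 (Y * X) ψ := by
    rw [appAt_comm X Y ψ hz, ← appAt_mul Y X ψ z1, hXeq z1]
  have key : ∀ a : Fin n, a ≠ z0 → appAt a X (appAt z1 Y ψ) = appAt z1 (X * Y) ψ := by
    intro a ha
    calc appAt a X (appAt z1 Y ψ) = appAt a X (appAt z0 Y ψ) := by rw [hYeq z0]
      _ = appAt z0 Y (appAt a X ψ) := appAt_comm X Y ψ ha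
      _ = appAt z0 Y (appAt z1 X ψ) := by rw [hXeq a, hXeq z1]
      _ = appAt z1 X (appAt z0 Y ψ) := (appAt_comm X Y ψ hz.symm).symm
      _ = appAt z1 X (appAt z1 Y ψ) := by rw [hYeq z0]
      _ = appAt z1 (X * Y) ψ := appAt_mul X Y ψ z1
  rw [psym_appAt_iff X (appAt z1 Y ψ) hY z0]
  constructor
  · intro h
    have h2 := h z1
    rw [key z1 hz.symm, E1] at h2
    have h3 : appAt z1 (X * Y - Y * X) ψ = 0 := by
      rw [appAt_sub, h2, sub_self]
    exact appAt_eq_zero_trans _ ψ hψ z1 z0 h3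
  · intro h a
    have h3 : appAt z1 (X * Y - Y * X) ψ = 0 :=
      appAt_eq_zero_trans _ ψ hψ z0 z1 h
    have hxy : appAt z1 (X * Y) ψ = appAt z1 (Y * X) ψ := by
      rw [appAt_sub] at h3
      exact sub_eq_zero.mp h3
    by_cases ha : a = z0
    · rw [ha]
    · rw [key a ha, E1, hxy]
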